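/- For every R' > 0 there exists N > 0 such that for every measurable function f : ℍ² → ℝ (or ℂ), ‖f‖²_{L²(ℍ²; dvol_g)} ≤ Σ_{(j,k) ∈ ℤ²} ‖f‖²_{L²(𝓡_{j,k}(R'); dvol_g)} ≤ N · ‖f‖²_{L²(ℍ²; dvol_g)}. -/

import Mathlib

open MeasureTheory Real Set

/-- The hyperbolic half-plane, as a subset of `ℝ × ℝ`. -/
def H2 : Set (ℝ × ℝ) := {z | 0 < z.2}

/-- The Riemannian measure `dvol_g = dx dy / y²` of the hyperbolic half-plane. -/
noncomputable def volG : Measure (ℝ × ℝ) :=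
  (volume : Measure (ℝ × ℝ)).withDensity fun z => ENNReal.ofReal (z.2 ^ 2)⁻¹

/-- The rectangle `𝓡_{j,k}(R')`. -/
noncomputable def rect (R' : ℝ) (j k : ℤ) : Set (ℝ × ℝ) :=
  {z | |z.1 - (2 : ℝ) ^ (R' * (j : ℝ)) * (k : ℝ)| < (2 : ℝ) ^ (R' * (j : ℝ)) ∧
       (2 : ℝ) ^ (R' * ((j : ℝ) - 1)) < z.2 ∧
       z.2 < (3 : ℝ) ^ R' * (2 : ℝ) ^ (R' * ((j : ℝ) - 1))}

/-! Every point of `H2` lies in some rectangle `rect R' j k`, which gives the lower bound. For the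
upper bound, `z ∈ rect R' j k` forces `|logb 2 z.2 / R' - j| < 1` (because `logb 2 3 < 2`) and
`|z.1 / 2 ^ (R' * j) - k| < 1`, so at most `2 * 2 = 4` rectangles contain `z`, and a family of
sets with overlap at most `n` has total integral at most `n` times the integral over its union. -/

open scoped ENNReal Finset

section FiniteOverlap

variable {α ι : Type*} {s : ι → Set α} {n : ℕ}

theorem tsum_indicator_le_mul_of_card_le
    (hs : ∀ x, ∃ t : Finset ι, #t ≤ n ∧ {i | x ∈ s i} ⊆ t) (g : α → ℝ≥0∞) (x : α) :
    ∑' i, (s i).indicator g x ≤ n * g x := by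
  obtain ⟨t, ht, hst⟩ := hs x
  rw [tsum_eq_sum fun i hi => indicator_of_notMem (fun hx : x ∈ s i => hi (hst hx)) g]
  calc ∑ i ∈ t, (s i).indicator g x ≤ ∑ _i ∈ t, g x :=
        Finset.sum_le_sum fun i _ => indicator_le_self _ _ x
    _ = #t * g x := by rw [Finset.sum_const, nsmul_eq_mul]
    _ ≤ n * g x := by gcongr

theorem tsum_setLIntegral_le_mul_of_card_le [Countable ι] [MeasurableSpace α] {μ : Measure α}
    (hsm : ∀ i, MeasurableSet (s i)) (hs : ∀ x, ∃ t : Finset ι, #t ≤ n ∧ {i | x ∈ s i} ⊆ t)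
    {g : α → ℝ≥0∞} (hg : AEMeasurable g μ) :
    ∑' i, ∫⁻ x in s i, g x ∂μ ≤ n * ∫⁻ x, g x ∂μ := by
  simp_rw [← lintegral_indicator (hsm _)]
  rw [← lintegral_tsum fun i => hg.indicator (hsm i), ← lintegral_const_mul' _ _ (by simp)]
  exact lintegral_mono (tsum_indicator_le_mul_of_card_le hs g)

end FiniteOverlap

noncomputable def nearInts (a : ℝ) : Finset ℤ := Finset.Ioo (⌊a⌋ - 1) (⌊a⌋ + 2)

theorem card_nearInts (a : ℝ) : #(nearInts a) = 2 := by
  simp [nearInts, Int.card_Ioo]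

theorem mem_nearInts_of_abs_sub_lt_one {a : ℝ} {m : ℤ} (h : |a - m| < 1) : m ∈ nearInts a := by
  obtain ⟨h₁, h₂⟩ := abs_sub_lt_iff.mp h
  have hlo : ⌊a⌋ < m + 1 := by
    rw [Int.floor_lt]; push_cast; linarith
  have hhi : m - 1 ≤ ⌊a⌋ := by
    rw [Int.le_floor]; push_cast; linarith
  simp only [nearInts, Finset.mem_Ioo]
  omega

theorem one_lt_logb_two_three : 1 < logb 2 3 := by
  rw [lt_logb_iff_rpow_lt (by norm_num) (by norm_num)]; norm_num

theorem logb_two_three_lt_two : logb 2 3 < 2 := by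
  rw [logb_lt_iff_lt_rpow (by norm_num) (by norm_num)]; norm_num

theorem measurableSet_rect (R' : ℝ) (j k : ℤ) : MeasurableSet (rect R' j k) :=
  (measurableSet_lt ((measurable_fst.sub measurable_const).abs) measurable_const).inter
    ((measurableSet_lt measurable_const measurable_snd).inter
      (measurableSet_lt measurable_snd measurable_const))

theorem rect_subset_H2 (R' : ℝ) (j k : ℤ) : rect R' j k ⊆ H2 :=
  fun _ hz => (rpow_pos_of_pos two_pos _).trans hz.2.1

theorem abs_sub_mul_lt_iff {x c m : ℝ} (hc : 0 < c) : |x - c * m| < c ↔ |x / c - m| < 1 := by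
  rw [show x / c - m = (x - c * m) / c by field_simp, abs_div, abs_of_pos hc, div_lt_one hc]

theorem mem_rect_iff {R' : ℝ} (hR' : 0 < R') {z : ℝ × ℝ} (hz : z ∈ H2) (j k : ℤ) :
    z ∈ rect R' j k ↔ |z.1 / (2 : ℝ) ^ (R' * j) - k| < 1 ∧
      ((j : ℝ) - 1 < logb 2 z.2 / R' ∧ logb 2 z.2 / R' < (j : ℝ) - 1 + logb 2 3) := by
  have hupper : (3 : ℝ) ^ R' * (2 : ℝ) ^ (R' * ((j : ℝ) - 1))
      = (2 : ℝ) ^ (R' * ((j : ℝ) - 1 + logb 2 3)) := by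
    rw [mul_add, rpow_add two_pos, mul_comm R' (logb 2 3), rpow_mul zero_le_two (logb 2 3) R',
      rpow_logb two_pos (by norm_num) three_pos, mul_comm]
  simp only [rect, mem_ofPred_eq]
  rw [hupper, abs_sub_mul_lt_iff (rpow_pos_of_pos two_pos _), ← lt_logb_iff_rpow_lt one_lt_two hz,
    ← logb_lt_iff_lt_rpow one_lt_two hz, lt_div_iff₀ hR', div_lt_iff₀ hR']
  simp only [mul_comm R']

theorem H2_subset_iUnion_rect {R' : ℝ} (hR' : 0 < R') : H2 ⊆ ⋃ p : ℤ × ℤ, rect R' p.1 p.2 := by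
  intro z hz
  set u := logb 2 z.2 / R'
  set j := ⌈u⌉
  set c := (2 : ℝ) ^ (R' * j)
  refine mem_iUnion.mpr ⟨(j, ⌈z.1 / c⌉), (mem_rect_iff hR' hz _ _).mpr ⟨?_, ?_, ?_⟩⟩
  · rw [abs_sub_lt_iff]
    constructor <;> linarith [Int.le_ceil (z.1 / c), Int.ceil_lt_add_one (z.1 / c)]
  · linarith [Int.ceil_lt_add_one u]
  · linarith [Int.le_ceil u, one_lt_logb_two_three]

theorem exists_finset_card_le_four_rect {R' : ℝ} (hR' : 0 < R') (z : ℝ × ℝ) :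
    ∃ t : Finset (ℤ × ℤ), #t ≤ 4 ∧ {p : ℤ × ℤ | z ∈ rect R' p.1 p.2} ⊆ t := by
  refine ⟨(nearInts (logb 2 z.2 / R')).biUnion fun j =>
    (nearInts (z.1 / (2 : ℝ) ^ (R' * j))).image (Prod.mk j), ?_, ?_⟩
  · refine (Finset.card_biUnion_le_card_mul _ _ 2 fun j _ => ?_).trans (by rw [card_nearInts])
    exact Finset.card_image_le.trans (card_nearInts _).le
  · rintro ⟨j, k⟩ hz
    obtain ⟨hk, hj₁, hj₂⟩ := (mem_rect_iff hR' (rect_subset_H2 R' j k hz) j k).mp hz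
    have hj : |logb 2 z.2 / R' - j| < 1 := by
      rw [abs_sub_lt_iff]; constructor <;> linarith [logb_two_three_lt_two]
    simp only [Finset.coe_biUnion, Finset.coe_image, mem_iUnion, mem_image, Finset.mem_coe]
    exact ⟨j, mem_nearInts_of_abs_sub_lt_one hj, k, mem_nearInts_of_abs_sub_lt_one hk, rfl⟩

/-- Equivalence of the `L²_g` norm on the half-plane with the sum of the squared `L²_g` norms
over the rectangles `𝓡_{j,k}(R')`. -/
theorem norm_equivalence_rects (R' : ℝ) (hR' : 0 < R') :
    ∃ N : ℝ, 0 < N ∧ ∀ f : ℝ × ℝ → ℝ, Measurable f →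
      (∫⁻ z in H2, ENNReal.ofReal (f z ^ 2) ∂volG) ≤
          (∑' p : ℤ × ℤ, ∫⁻ z in rect R' p.1 p.2, ENNReal.ofReal (f z ^ 2) ∂volG) ∧
      (∑' p : ℤ × ℤ, ∫⁻ z in rect R' p.1 p.2, ENNReal.ofReal (f z ^ 2) ∂volG) ≤
          ENNReal.ofReal N * ∫⁻ z in H2, ENNReal.ofReal (f z ^ 2) ∂volG := by
  refine ⟨4, four_pos, fun f hf => ⟨?_, ?_⟩⟩
  · exact (lintegral_mono_set (H2_subset_iUnion_rect hR')).trans (lintegral_iUnion_le _ _)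
  · have hg : Measurable fun z => ENNReal.ofReal (f z ^ 2) := (hf.pow_const 2).ennreal_ofReal
    calc (∑' p : ℤ × ℤ, ∫⁻ z in rect R' p.1 p.2, ENNReal.ofReal (f z ^ 2) ∂volG)
        = ∑' p : ℤ × ℤ, ∫⁻ z in rect R' p.1 p.2, ENNReal.ofReal (f z ^ 2) ∂volG.restrict H2 :=
          tsum_congr fun p => by
            rw [Measure.restrict_restrict_of_subset (rect_subset_H2 R' p.1 p.2)]
      _ ≤ ((4 : ℕ) : ℝ≥0∞) * ∫⁻ z in H2, ENNReal.ofReal (f z ^ 2) ∂volG :=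
          tsum_setLIntegral_le_mul_of_card_le (s := fun p : ℤ × ℤ => rect R' p.1 p.2)
            (fun p => measurableSet_rect R' p.1 p.2) (exists_finset_card_le_four_rect hR')
            hg.aemeasurable
      _ = ENNReal.ofReal 4 * ∫⁻ z in H2, ENNReal.ofReal (f z ^ 2) ∂volG := by norm_num
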